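/- Let m ≥ 1 and n ≥ m be integers and let α ∈ ℝ. Define the type I X_m-Laguerre polynomial L_{m,n}^{I,α}(x) = L_m^{(α)}(−x) · L_{n−m}^{(α−1)}(x) + L_{n−m−1}^{(α)}(x) · L_m^{(α−1)}(−x) (the determinant of the 2×2 matrix with rows [L_m^{(α)}(−x), −L_{n−m−1}^{(α)}(x)] and [L_m^{(α−1)}(−x), L_{n−m}^{(α−1)}(x)], with the convention L_{−1}^{(α)} ≡ 0). Then for all x, L_{m,n}^{I,α}(x) = −L_{∅,(m),n}^{(α−1)}(x), where ∅ is the empty partition and (m) is the partition with a single part equal to m. -/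

import Mathlib

/-! Expanding the 2 × 2 Wronskian, `e^{-x} Wr[e^y L_m^{(α-1)}(-y), L_{n-m}^{(α-1)}(y)]` equals
`L_m^{(α-1)}(-x) (L_{n-m}^{(α-1)})'(x) - e^{-x} (e^y L_m^{(α-1)}(-y))'(x) L_{n-m}^{(α-1)}(x)`,
so the identity comes down to the two derivative rules `(L_k^{(α)})' = -L_{k-1}^{(α+1)}` and
`(e^x L_m^{(α)}(-x))' = e^x L_m^{(α+1)}(-x)`. The second follows from the first and the
contiguity relation `L_m^{(α)} = L_m^{(α+1)} - L_{m-1}^{(α+1)}`; both are checked coefficientwise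
on the explicit sums. -/

open scoped BigOperators

/-- The Laguerre polynomial `L_n^{(α)}` as a function on `ℝ`; it is `0` for `n < 0`. -/
noncomputable def laguerre (α : ℝ) (n : ℤ) (x : ℝ) : ℝ :=
  if n < 0 then 0 else
    ∑ k ∈ Finset.range (n.toNat + 1),
      ((-1 : ℝ) ^ k / (Nat.factorial k : ℝ)) *
        ((∏ i ∈ Finset.Icc (k + 1) n.toNat, (α + (i : ℝ))) / (Nat.factorial (n.toNat - k) : ℝ)) *
        x ^ k

/-- The Wronskian `Wr[f_1, …, f_r](x) = det (f_i^{(j-1)}(x))`. -/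
noncomputable def Wr {r : ℕ} (f : Fin r → ℝ → ℝ) (x : ℝ) : ℝ :=
  Matrix.det (Matrix.of fun i j : Fin r => iteratedDeriv (j : ℕ) (f i) x)

/-- A partition: a weakly decreasing finite sequence of positive integers,
encoded by its length `len` and a function `part` giving the parts (0-indexed). -/
structure PartitionSeq where
  len : ℕ
  part : ℕ → ℕ
  pos : ∀ i, i < len → 1 ≤ part i
  antitone : ∀ i j, i ≤ j → j < len → part j ≤ part i

/-- The size `|λ|` of a partition. -/
def PartitionSeq.size (p : PartitionSeq) : ℕ := ∑ i ∈ Finset.range p.len, p.part i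

/-- The degree sequence `n_j = λ_j + r1 − j` (0-indexed: `n_i = λ_{i+1} + r1 − 1 − i`). -/
def PartitionSeq.deg (p : PartitionSeq) (i : ℕ) : ℕ := p.part i + (p.len - 1 - i)

/-- The generalized Laguerre polynomial `Ω_{λ,μ}^{(α)}` as a function on `ℝ`. -/
noncomputable def genLagFun (α : ℝ) (lam mu : PartitionSeq) (x : ℝ) : ℝ :=
  Real.exp (-(mu.len : ℝ) * x) *
    Wr (fun i : Fin (lam.len + mu.len) => fun y =>
      if (i : ℕ) < lam.len then laguerre α (lam.deg (i : ℕ)) y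
      else Real.exp y * laguerre α (mu.deg ((i : ℕ) - lam.len)) (-y)) x

/-- The degree sequence `ℕ_{λ,μ}`. -/
def degSeq (lam mu : PartitionSeq) : Set ℕ :=
  {n : ℕ | (lam.size : ℤ) + mu.size - lam.len ≤ (n : ℤ) ∧
    ∀ j, j < lam.len → (n : ℤ) - lam.size - mu.size ≠ (lam.part j : ℤ) - (j + 1)}

/-- The exceptional Laguerre polynomial `L_{λ,μ,n}^{(α)}` as a function on `ℝ`. -/
noncomputable def excLagFun (α : ℝ) (lam mu : PartitionSeq) (n : ℕ) (x : ℝ) : ℝ :=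
  Real.exp (-(mu.len : ℝ) * x) *
    Wr (fun i : Fin (lam.len + mu.len + 1) => fun y =>
      if (i : ℕ) < lam.len then laguerre α (lam.deg (i : ℕ)) y
      else if (i : ℕ) < lam.len + mu.len then
        Real.exp y * laguerre α (mu.deg ((i : ℕ) - lam.len)) (-y)
      else laguerre α ((n : ℤ) - lam.size - mu.size + lam.len) y) x

/-- The empty partition. -/
def emptyPartition : PartitionSeq :=
  ⟨0, fun _ => 1, fun i hi => absurd hi (Nat.not_lt_zero i),
    fun _ j _ hj => absurd hj (Nat.not_lt_zero j)⟩

/-- The constant partition with `len` parts all equal to `m ≥ 1`. -/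
def constPartition (m len : ℕ) (hm : 1 ≤ m) : PartitionSeq :=
  ⟨len, fun _ => m, fun _ _ => hm, fun _ _ _ _ => le_refl m⟩

noncomputable def laguerreCoeff (α : ℝ) (N k : ℕ) : ℝ :=
  ((-1 : ℝ) ^ k / (Nat.factorial k : ℝ)) *
    ((∏ i ∈ Finset.Icc (k + 1) N, (α + (i : ℝ))) / (Nat.factorial (N - k) : ℝ))

lemma laguerre_natCast_eq_sum (α : ℝ) (N : ℕ) (x : ℝ) :
    laguerre α (N : ℤ) x = ∑ k ∈ Finset.range (N + 1), laguerreCoeff α N k * x ^ k := by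
  simp [laguerre, laguerreCoeff]

lemma laguerre_of_neg (α : ℝ) {n : ℤ} (h : n < 0) (x : ℝ) : laguerre α n x = 0 := by
  simp [laguerre, h]

lemma laguerreCoeff_self (α : ℝ) (N : ℕ) :
    laguerreCoeff α N N = (-1 : ℝ) ^ N / (Nat.factorial N : ℝ) := by
  simp [laguerreCoeff]

lemma prod_Icc_add_one_shift (α : ℝ) (a b : ℕ) :
    ∏ i ∈ Finset.Icc a b, (α + 1 + (i : ℝ)) = ∏ i ∈ Finset.Icc (a + 1) (b + 1), (α + (i : ℝ)) := by
  rw [← Finset.map_add_right_Icc, Finset.prod_map]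
  refine Finset.prod_congr rfl fun i _ => ?_
  push_cast [addRightEmbedding_apply]
  ring

lemma laguerreCoeff_succ_mul (α : ℝ) (N k : ℕ) :
    laguerreCoeff α (N + 1) (k + 1) * (k + 1) = -laguerreCoeff (α + 1) N k := by
  rw [laguerreCoeff, laguerreCoeff, prod_Icc_add_one_shift, Nat.add_sub_add_right,
    Nat.factorial_succ]
  push_cast
  field_simp
  ring

lemma laguerreCoeff_eq_sub (α : ℝ) {N k : ℕ} (hk : k ≤ N) :
    laguerreCoeff α (N + 1) k = laguerreCoeff (α + 1) (N + 1) k - laguerreCoeff (α + 1) N k := by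
  set Q := ∏ i ∈ Finset.Icc (k + 2) (N + 1), (α + (i : ℝ))
  have hbot : ∏ i ∈ Finset.Icc (k + 1) (N + 1), (α + (i : ℝ)) = (α + (k + 1)) * Q := by
    rw [Finset.Icc_eq_cons_Ioc (by omega), Finset.prod_cons, ← Finset.Icc_add_one_left_eq_Ioc]
    push_cast
    rfl
  have htop : ∏ i ∈ Finset.Icc (k + 1) (N + 1), (α + 1 + (i : ℝ)) = Q * (α + (N + 2)) := by
    rw [prod_Icc_add_one_shift, Finset.prod_Icc_succ_top (by omega)]
    push_cast
    ring
  have hfac : (Nat.factorial (N + 1 - k) : ℝ) = ((N : ℝ) + 1 - k) * Nat.factorial (N - k) := by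
    rw [show N + 1 - k = N - k + 1 by omega, Nat.factorial_succ]
    push_cast [Nat.cast_sub hk]
    ring
  have hNk : (N : ℝ) + 1 - k ≠ 0 := by
    have : (k : ℝ) ≤ N := by exact_mod_cast hk
    linarith
  rw [laguerreCoeff, laguerreCoeff, laguerreCoeff, hbot, htop, prod_Icc_add_one_shift, hfac]
  field_simp
  ring

lemma laguerre_eq_sub (α : ℝ) (n : ℤ) (x : ℝ) :
    laguerre α n x = laguerre (α + 1) n x - laguerre (α + 1) (n - 1) x := by
  rcases lt_or_ge n 0 with hn | hn
  · simp [laguerre_of_neg _ hn, laguerre_of_neg _ (by omega : n - 1 < 0)]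
  obtain ⟨N, rfl⟩ := Int.eq_ofNat_of_zero_le hn
  rcases N with _ | N
  · rw [laguerre_natCast_eq_sum, laguerre_natCast_eq_sum, laguerre_of_neg _ (by omega)]
    simp [laguerreCoeff_self]
  rw [show ((N + 1 : ℕ) : ℤ) - 1 = N by omega, laguerre_natCast_eq_sum, laguerre_natCast_eq_sum,
    laguerre_natCast_eq_sum, Finset.sum_range_succ, Finset.sum_range_succ (n := N + 1),
    laguerreCoeff_self, laguerreCoeff_self, add_sub_right_comm, ← Finset.sum_sub_distrib]
  congr 1
  refine Finset.sum_congr rfl fun k hk => ?_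
  rw [laguerreCoeff_eq_sub α (Finset.mem_range_succ_iff.mp hk)]
  ring

lemma laguerre_hasDerivAt (α : ℝ) (n : ℤ) (x : ℝ) :
    HasDerivAt (laguerre α n) (-laguerre (α + 1) (n - 1) x) x := by
  rcases lt_or_ge n 0 with hn | hn
  · have : laguerre α n = fun _ => 0 := funext (laguerre_of_neg α hn)
    rw [this, laguerre_of_neg _ (by omega), neg_zero]
    exact hasDerivAt_const x 0
  obtain ⟨N, rfl⟩ := Int.eq_ofNat_of_zero_le hn
  have hsum : HasDerivAt (laguerre α N)
      (∑ k ∈ Finset.range (N + 1), laguerreCoeff α N k * ((k : ℝ) * x ^ (k - 1))) x := by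
    rw [show laguerre α N = _ from funext (laguerre_natCast_eq_sum α N)]
    exact HasDerivAt.fun_sum fun k _ => (hasDerivAt_pow k x).const_mul _
  convert hsum using 1
  rcases N with _ | N
  · simp [laguerre_of_neg]
  rw [show ((N + 1 : ℕ) : ℤ) - 1 = N by omega, laguerre_natCast_eq_sum,
    Finset.sum_range_succ' (fun k => laguerreCoeff α (N + 1) k * ((k : ℝ) * x ^ (k - 1))),
    ← Finset.sum_neg_distrib]
  simp only [Nat.cast_zero, zero_mul, mul_zero, add_zero]
  refine Finset.sum_congr rfl fun k _ => ?_
  rw [← neg_mul, ← laguerreCoeff_succ_mul, Nat.add_sub_cancel]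
  push_cast
  ring

lemma hasDerivAt_exp_mul_laguerre_neg (α : ℝ) (n : ℤ) (x : ℝ) :
    HasDerivAt (fun y => Real.exp y * laguerre α n (-y))
      (Real.exp x * laguerre (α + 1) n (-x)) x := by
  have hcomp : HasDerivAt (fun y => laguerre α n (-y)) (laguerre (α + 1) (n - 1) (-x)) x := by
    simpa [Function.comp_def] using (laguerre_hasDerivAt α n (-x)).comp x (hasDerivAt_neg x)
  refine ((Real.hasDerivAt_exp x).mul hcomp).congr_deriv ?_
  rw [laguerre_eq_sub α n (-x)]
  ring

lemma Wr_fin_two (f : Fin 2 → ℝ → ℝ) (x : ℝ) :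
    Wr f x = f 0 x * deriv (f 1) x - deriv (f 0) x * f 1 x := by
  simp [Wr, Matrix.det_fin_two]

lemma excLagFun_empty_single (α : ℝ) (m n : ℕ) (hm : 1 ≤ m) (x : ℝ) :
    excLagFun α emptyPartition (constPartition m 1 hm) n x =
      Real.exp (-x) * Wr ![fun y => Real.exp y * laguerre α m (-y), laguerre α (n - m)] x := by
  rw [excLagFun]
  congr 1
  · simp [constPartition]
  · congr 1
    funext i y
    fin_cases i <;> simp [emptyPartition, constPartition, PartitionSeq.deg, PartitionSeq.size]

theorem typeI_Xm_laguerre_general (m n : ℕ) (hm : 1 ≤ m) (α : ℝ) (x : ℝ) :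
    laguerre α (m : ℤ) (-x) * laguerre (α - 1) ((n : ℤ) - m) x +
      laguerre α ((n : ℤ) - m - 1) x * laguerre (α - 1) (m : ℤ) (-x) =
    - excLagFun (α - 1) emptyPartition (constPartition m 1 hm) n x := by
  rw [excLagFun_empty_single, Wr_fin_two]
  simp only [Matrix.cons_val_zero, Matrix.cons_val_one]
  rw [(hasDerivAt_exp_mul_laguerre_neg (α - 1) m x).deriv,
    (laguerre_hasDerivAt (α - 1) (n - m) x).deriv, sub_add_cancel, Real.exp_neg]
  field_simp
  ring

/-- **Type I `X_m`-Laguerre polynomials via partitions.** For `m ≥ 1`, `n ≥ m`,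
`L_{m,n}^{I,α}(x) = L_m^{(α)}(−x) L_{n−m}^{(α−1)}(x) + L_{n−m−1}^{(α)}(x) L_m^{(α−1)}(−x)`
equals `−L_{∅,(m),n}^{(α−1)}(x)`. -/
theorem typeI_Xm_laguerre (m n : ℕ) (hm : 1 ≤ m) (hmn : m ≤ n) (α : ℝ) (x : ℝ) :
    laguerre α (m : ℤ) (-x) * laguerre (α - 1) ((n : ℤ) - m) x +
      laguerre α ((n : ℤ) - m - 1) x * laguerre (α - 1) (m : ℤ) (-x) =
    - excLagFun (α - 1) emptyPartition (constPartition m 1 hm) n x :=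
  typeI_Xm_laguerre_general m n hm α x
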